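/- arXiv:2305.08858 — 3 statements merged into one kernel-verified Lean document; each statement's English description precedes it below -/
import Mathlib

section
/- In the ℤ₂-graded ring R = ℤ (with R₀ = ℤ, R₁ = 0) and graded R-module M = ℤ/24ℤ (with M₀ = ℤ/24ℤ, M₁ = 0), the submodule U = {0̄, 8̄, 16̄} is a graded weakly J_gr-semiprime submodule of M but is not a graded weakly semiprime submodule of M. -/
open Pointwise

/-- A submodule is graded if it is generated by its homogeneous elements. -/
def IsGradedSub {Γ R M σ : Type*} [CommRing R] [AddCommGroup M] [Module R M]
    [SetLike σ M] (ℳ : Γ → σ) (U : Submodule R M) : Prop :=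
  U = Submodule.span R {m | m ∈ U ∧ SetLike.IsHomogeneousElem ℳ m}

/-- A graded maximal submodule. -/
def IsGrMaximal {Γ R M σ : Type*} [CommRing R] [AddCommGroup M] [Module R M]
    [SetLike σ M] (ℳ : Γ → σ) (B : Submodule R M) : Prop :=
  IsGradedSub ℳ B ∧ B ≠ ⊤ ∧
    ∀ L : Submodule R M, IsGradedSub ℳ L → B ≤ L → L = B ∨ L = ⊤

/-- The graded Jacobson radical: the intersection of all graded maximal submodules
(the whole module if there are none). -/
def Jgr {Γ R M σ : Type*} [CommRing R] [AddCommGroup M] [Module R M]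
    [SetLike σ M] (ℳ : Γ → σ) : Submodule R M :=
  sInf {B | IsGrMaximal ℳ B}

/-- Graded weakly semiprime submodule. -/
def IsGrWSemiprime {Γ R M σR σM : Type*} [CommRing R] [AddCommGroup M] [Module R M]
    [SetLike σR R] [SetLike σM M] (𝒜 : Γ → σR) (ℳ : Γ → σM) (U : Submodule R M) : Prop :=
  IsGradedSub ℳ U ∧ U ≠ ⊤ ∧
    ∀ (r : R) (m : M) (n : ℕ), 0 < n → SetLike.IsHomogeneousElem 𝒜 r →
      SetLike.IsHomogeneousElem ℳ m → r ^ n • m ≠ 0 → r ^ n • m ∈ U → r • m ∈ U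

/-- Graded weakly `J_gr`-semiprime submodule. -/
def IsGrWJgrSemiprime {Γ R M σR σM : Type*} [CommRing R] [AddCommGroup M] [Module R M]
    [SetLike σR R] [SetLike σM M] (𝒜 : Γ → σR) (ℳ : Γ → σM) (U : Submodule R M) : Prop :=
  IsGradedSub ℳ U ∧ U ≠ ⊤ ∧
    ∀ (r : R) (m : M) (n : ℕ), 0 < n → SetLike.IsHomogeneousElem 𝒜 r →
      SetLike.IsHomogeneousElem ℳ m → r ^ n • m ≠ 0 → r ^ n • m ∈ U → r • m ∈ U ⊔ Jgr ℳ

/-- The residual submodule `(U :_M L) = {m : M | L • m ⊆ U}`. -/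
def mcolon {R M : Type*} [CommRing R] [AddCommGroup M] [Module R M]
    (U : Submodule R M) (L : Ideal R) : Submodule R M where
  carrier := {m | ∀ x ∈ L, x • m ∈ U}
  add_mem' := by
    intro a b ha hb x hx
    simpa [smul_add] using U.add_mem (ha x hx) (hb x hx)
  zero_mem' := by intro x hx; simp
  smul_mem' := by
    intro c m hm x hx
    rw [smul_comm]
    exact U.smul_mem c (hm x hx)


/-! Every element of `ℤ/24` is homogeneous, so all submodules are graded and they are the
ideals of `ℤ/24`. Since `6` is nilpotent, `1 - 6k` is a unit, so `6` lies in every maximal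
submodule and hence in `J_gr`. As `2 = 8 - 6`, the submodule `⟨2⟩ = ker (ℤ/24 → ℤ/2)` lies in
`U + J_gr`, and it is semiprime because `ℤ/2` is a domain; this gives the first claim since
`U ⊆ ⟨2⟩`. For the second, `2² • 2 = 8 ∈ U` but `2 • 2 = 4 ∉ U`. -/

section Graded

variable {Γ R M σ : Type*} [CommRing R] [AddCommGroup M] [Module R M] [SetLike σ M]
  {ℳ : Γ → σ}

theorem isGradedSub_of_forall_isHomogeneousElem
    (hℳ : ∀ m : M, SetLike.IsHomogeneousElem ℳ m) (U : Submodule R M) : IsGradedSub ℳ U := by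
  rw [IsGradedSub]
  simp only [hℳ, and_true]
  exact (Submodule.span_eq U).symm

theorem IsGradedSub.sup_span_singleton {B : Submodule R M} (hB : IsGradedSub ℳ B) {x : M}
    (hx : SetLike.IsHomogeneousElem ℳ x) : IsGradedSub ℳ (B ⊔ R ∙ x) := by
  refine le_antisymm (sup_le ?_ ?_) (Submodule.span_le.mpr fun m hm => hm.1)
  · rw [hB]
    exact Submodule.span_mono fun m hm => ⟨Submodule.mem_sup_left (hB ▸ hm.1), hm.2⟩
  · rw [Submodule.span_singleton_le_iff_mem]
    exact Submodule.subset_span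
      ⟨Submodule.mem_sup_right (Submodule.mem_span_singleton_self x), hx⟩

theorem mem_Jgr_of_sup_span_eq_top {x : M} (hx : SetLike.IsHomogeneousElem ℳ x)
    (hsmall : ∀ B : Submodule R M, B ⊔ R ∙ x = ⊤ → B = ⊤) : x ∈ Jgr (R := R) ℳ := by
  refine Submodule.mem_sInf.mpr fun B ⟨hBgr, hBne, hBmax⟩ => ?_
  rcases hBmax _ (hBgr.sup_span_singleton hx) le_sup_left with hB | hB
  · exact hB ▸ Submodule.mem_sup_right (Submodule.mem_span_singleton_self x)
  · exact absurd (hsmall B hB) hBne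

end Graded

namespace ZMod

variable {n : ℕ}

theorem mul_mem_of_mem_intSubmodule (B : Submodule ℤ (ZMod n)) (x : ZMod n) {b : ZMod n}
    (hb : b ∈ B) : x * b ∈ B := by
  simpa only [zsmul_eq_mul, intCast_zmod_cast] using B.smul_mem (cast x : ℤ) hb

theorem intSubmodule_eq_top_of_sup_span_nilpotent {x : ZMod n} (hx : IsNilpotent x)
    {B : Submodule ℤ (ZMod n)} (hB : B ⊔ ℤ ∙ x = ⊤) : B = ⊤ := by
  obtain ⟨b, hb, _, hkx, hbk⟩ := Submodule.mem_sup.mp (hB ▸ Submodule.mem_top (x := 1))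
  obtain ⟨k, rfl⟩ := Submodule.mem_span_singleton.mp hkx
  have hunit : IsUnit b := by
    rw [show b = 1 - k * x by rw [← hbk, zsmul_eq_mul]; ring]
    exact ((Commute.all _ _).isNilpotent_mul_left hx).isUnit_one_sub
  refine eq_top_iff.mpr fun y _ => ?_
  convert mul_mem_of_mem_intSubmodule B (y * ↑hunit.unit⁻¹) hb using 1
  rw [mul_assoc, hunit.val_inv_mul, mul_one]

theorem mem_span_natCast_iff_castHom_eq_zero {d : ℕ} (hd : d ∣ n) (x : ZMod n) :
    x ∈ ℤ ∙ (d : ZMod n) ↔ castHom hd (ZMod d) x = 0 := by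
  rw [Submodule.mem_span_singleton]
  constructor
  · rintro ⟨k, rfl⟩
    rw [zsmul_eq_mul, map_mul, map_natCast, natCast_self, mul_zero]
  · intro hx
    rw [← intCast_zmod_cast x, map_intCast, intCast_zmod_eq_zero_iff_dvd] at hx
    obtain ⟨c, hc⟩ := hx
    exact ⟨c, by rw [zsmul_eq_mul, ← intCast_zmod_cast x, hc]; push_cast; ring⟩

theorem smul_mem_span_prime_of_pow_smul_mem {p : ℕ} [Fact p.Prime] (hp : p ∣ n) {r : ℤ}
    {m : ZMod n} {k : ℕ} (hk : 0 < k) (h : r ^ k • m ∈ ℤ ∙ (p : ZMod n)) :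
    r • m ∈ ℤ ∙ (p : ZMod n) := by
  rw [mem_span_natCast_iff_castHom_eq_zero hp, zsmul_eq_mul, map_mul] at h ⊢
  push_cast at h ⊢
  rcases mul_eq_zero.mp h with hr | hm
  · rw [map_pow, pow_eq_zero_iff hk.ne'] at hr
    rw [hr, zero_mul]
  · rw [hm, mul_zero]

end ZMod

theorem stmt1_general (𝒜 : ZMod 2 → AddSubgroup ℤ)
    (ℳ : ZMod 2 → AddSubgroup (ZMod 24))
    (h𝒜0 : 𝒜 0 = ⊤)
    (hℳ0 : ℳ 0 = ⊤) :
    IsGrWJgrSemiprime 𝒜 ℳ (Submodule.span ℤ {(8 : ZMod 24)}) ∧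
      ¬ IsGrWSemiprime 𝒜 ℳ (Submodule.span ℤ {(8 : ZMod 24)}) := by
  have homM (m : ZMod 24) : SetLike.IsHomogeneousElem ℳ m := ⟨0, hℳ0 ▸ trivial⟩
  have mem_span_8 (x : ZMod 24) :
      x ∈ ℤ ∙ (8 : ZMod 24) ↔ ZMod.castHom (by norm_num) (ZMod 8) x = 0 :=
    ZMod.mem_span_natCast_iff_castHom_eq_zero (n := 24) (d := 8) (by norm_num) x
  have hU : Submodule.span ℤ {(8 : ZMod 24)} ≠ ⊤ := fun h =>
    absurd ((mem_span_8 1).mp (h ▸ Submodule.mem_top)) (by decide)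
  refine ⟨⟨isGradedSub_of_forall_isHomogeneousElem homM _, hU, ?_⟩, ?_⟩
  · intro r m k hk _ _ _ hmem
    have h_two : r • m ∈ ℤ ∙ ((2 : ℕ) : ZMod 24) := by
      refine ZMod.smul_mem_span_prime_of_pow_smul_mem (by norm_num) hk ?_
      refine (Submodule.span_singleton_le_iff_mem _ _).mpr ?_ hmem
      rw [ZMod.mem_span_natCast_iff_castHom_eq_zero (by norm_num)]
      decide
    have h_six : (6 : ZMod 24) ∈ Jgr ℳ := mem_Jgr_of_sup_span_eq_top (homM 6) fun _ =>
      ZMod.intSubmodule_eq_top_of_sup_span_nilpotent ⟨3, by decide⟩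
    refine (Submodule.span_singleton_le_iff_mem _ _).mpr ?_ h_two
    rw [show ((2 : ℕ) : ZMod 24) = 8 + -6 by decide]
    exact Submodule.add_mem_sup (Submodule.mem_span_singleton_self _) (neg_mem h_six)
  · rintro ⟨-, -, h⟩
    have h_four := h 2 2 2 two_pos ⟨0, h𝒜0 ▸ trivial⟩ (homM 2) (by decide)
      (by rw [mem_span_8]; decide)
    exact absurd ((mem_span_8 _).mp h_four) (by decide)

theorem stmt1 (𝒜 : ZMod 2 → AddSubgroup ℤ) [GradedRing 𝒜]
    (ℳ : ZMod 2 → AddSubgroup (ZMod 24))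
    [SetLike.GradedSMul 𝒜 ℳ] [DirectSum.Decomposition ℳ]
    (h𝒜0 : 𝒜 0 = ⊤) (h𝒜1 : 𝒜 1 = ⊥)
    (hℳ0 : ℳ 0 = ⊤) (hℳ1 : ℳ 1 = ⊥) :
    IsGrWJgrSemiprime 𝒜 ℳ (Submodule.span ℤ {(8 : ZMod 24)}) ∧
      ¬ IsGrWSemiprime 𝒜 ℳ (Submodule.span ℤ {(8 : ZMod 24)}) :=
  stmt1_general 𝒜 ℳ h𝒜0 hℳ0
end

section
/- A proper graded submodule U of M is graded weakly J_gr-semiprime if and only if for every homogeneous r ∈ h(R) and n ∈ ℤ⁺, (U :_M ⟨rⁿ⟩) ⊆ (0 :_M ⟨rⁿ⟩) ∪ (U + J_gr(M) :_M ⟨r⟩). -/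
open Pointwise

/-! For homogeneous `r` and any `m` with `r ^ n m ∈ U`, each `r ^ n m_i` is the component of
`r ^ n m` of degree `n d + i`, hence lies in the graded submodule `U`. When it is nonzero the
hypothesis gives `r m_i ∈ U + J_gr(M)`; when it vanishes, `r m_i` lies in every graded maximal
submodule `B`, since otherwise `B + R r m_i = M`, so `m_i = b + t r m_i` with `b ∈ B`, and
`1 - t r` is invertible on `m_i` because `r ^ n m_i = 0`, forcing `m_i ∈ B`. The converse is
immediate. -/

theorem mem_mcolon_span_singleton {R M : Type*} [CommRing R] [AddCommGroup M] [Module R M]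
    {U : Submodule R M} {a : R} {m : M} :
    m ∈ mcolon U (Ideal.span {a}) ↔ a • m ∈ U := by
  refine ⟨fun h => h a (Ideal.mem_span_singleton_self a), fun h x hx => ?_⟩
  obtain ⟨c, rfl⟩ := Ideal.mem_span_singleton'.mp hx
  rw [mul_smul]
  exact U.smul_mem c h

/- Writing `m = b + t r m`, the geometric sum `∑_{k < n} (t r) ^ k` inverts `1 - t r` on `m`. -/
theorem Submodule.mem_of_mem_sup_span_singleton_smul {R M : Type*} [CommRing R]
    [AddCommGroup M] [Module R M] {B : Submodule R M} {r : R} {m : M} {n : ℕ}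
    (hm : m ∈ B ⊔ Submodule.span R {r • m}) (h0 : r ^ n • m = 0) : m ∈ B := by
  obtain ⟨b, hb, z, hz, hbz⟩ := Submodule.mem_sup.mp hm
  obtain ⟨t, rfl⟩ := Submodule.mem_span_singleton.mp hz
  have hb' : (1 - t * r) • m = b := by
    rw [sub_smul, one_smul, mul_smul, eq_sub_of_add_eq hbz]
  have hm_eq : m = (∑ k ∈ Finset.range n, (t * r) ^ k) • (1 - t * r) • m := by
    rw [← mul_smul, geom_sum_mul_neg, sub_smul, one_smul, mul_pow, mul_smul, h0, smul_zero,
      sub_zero]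
  rw [hm_eq, hb']
  exact B.smul_mem _ hb

section Graded

variable {Γ R M σA σM : Type*} [CommRing R] [AddCommGroup M] [Module R M]
  [SetLike σM M] {ℳ : Γ → σM}

theorem isGradedSub_iff_le {U : Submodule R M} :
    IsGradedSub ℳ U ↔ U ≤ Submodule.span R {m | m ∈ U ∧ SetLike.IsHomogeneousElem ℳ m} :=
  ⟨le_of_eq, fun h => le_antisymm h (Submodule.span_le.mpr fun _ hm => hm.1)⟩

theorem isGradedSub_span {s : Set M} (hs : ∀ m ∈ s, SetLike.IsHomogeneousElem ℳ m) :
    IsGradedSub ℳ (Submodule.span R s) :=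
  isGradedSub_iff_le.mpr <| Submodule.span_mono fun m hm => ⟨Submodule.subset_span hm, hs m hm⟩

theorem IsGradedSub.sup {U V : Submodule R M} (hU : IsGradedSub ℳ U) (hV : IsGradedSub ℳ V) :
    IsGradedSub ℳ (U ⊔ V) := by
  refine isGradedSub_iff_le.mpr (sup_le ?_ ?_)
  · exact hU.le.trans (Submodule.span_mono fun m hm => ⟨Submodule.mem_sup_left hm.1, hm.2⟩)
  · exact hV.le.trans (Submodule.span_mono fun m hm => ⟨Submodule.mem_sup_right hm.1, hm.2⟩)

variable [SetLike σA R] {𝒜 : Γ → σA} [Add Γ] [SetLike.GradedSMul 𝒜 ℳ]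

theorem IsGrMaximal.smul_mem_of_pow_smul_eq_zero {B : Submodule R M} (hB : IsGrMaximal ℳ B)
    {r : R} {m : M} (hr : SetLike.IsHomogeneousElem 𝒜 r) (hm : SetLike.IsHomogeneousElem ℳ m)
    {n : ℕ} (h0 : r ^ n • m = 0) : r • m ∈ B := by
  obtain ⟨hBgr, -, hBmax⟩ := hB
  by_contra hrm
  have hgr : IsGradedSub ℳ (B ⊔ Submodule.span R {r • m}) :=
    hBgr.sup (isGradedSub_span fun x hx => (Set.mem_singleton_iff.mp hx) ▸ hr.graded_smul hm)
  rcases hBmax _ hgr le_sup_left with hL | hL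
  · exact hrm (hL ▸ Submodule.mem_sup_right (Submodule.mem_span_singleton_self _))
  · exact hrm (B.smul_mem r (Submodule.mem_of_mem_sup_span_singleton_smul (hL ▸ trivial) h0))

theorem smul_mem_Jgr_of_pow_smul_eq_zero {r : R} {m : M} (hr : SetLike.IsHomogeneousElem 𝒜 r)
    (hm : SetLike.IsHomogeneousElem ℳ m) {n : ℕ} (h0 : r ^ n • m = 0) : r • m ∈ Jgr (R := R) ℳ :=
  Submodule.mem_sInf.mpr fun _ hB => hB.smul_mem_of_pow_smul_eq_zero hr hm h0

end Graded

section Decomposition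

open DirectSum

variable {Γ R M σA σM : Type*} [DecidableEq Γ] [AddGroup Γ] [CommRing R] [AddCommGroup M]
  [Module R M] [SetLike σA R] [SetLike σM M] [AddSubmonoidClass σM M] {ℳ : Γ → σM} [Decomposition ℳ]

theorem coe_decompose_smul_of_mem {𝒜 : Γ → σA} [SetLike.GradedSMul 𝒜 ℳ] {s : R} {d : Γ}
    (hs : s ∈ 𝒜 d) (m : M) (γ : Γ) :
    (decompose ℳ (s • m) γ : M) = s • (decompose ℳ m (-d + γ) : M) := by
  induction m using Decomposition.inductionOn ℳ with
  | zero => simp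
  | @homogeneous j x =>
    by_cases hj : j = -d + γ
    · subst hj
      have hsx : s • (x : M) ∈ ℳ γ := by
        simpa using SetLike.GradedSMul.smul_mem hs x.2
      rw [decompose_of_mem_same ℳ x.2, decompose_of_mem_same ℳ hsx]
    · have hne : d + j ≠ γ := fun h => hj (eq_neg_add_of_add_eq h)
      rw [decompose_of_mem_ne ℳ x.2 hj,
        decompose_of_mem_ne ℳ (SetLike.GradedSMul.smul_mem hs x.2) hne, smul_zero]
  | add a b ha hb =>
    rw [smul_add, decompose_add, decompose_add, DirectSum.add_apply, DirectSum.add_apply,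
      AddMemClass.coe_add, AddMemClass.coe_add, ha, hb, smul_add]

theorem IsGradedSub.isHomogeneous [AddSubmonoidClass σA R] (𝒜 : Γ → σA) [GradedRing 𝒜]
    [SetLike.GradedSMul 𝒜 ℳ] {U : Submodule R M} (hU : IsGradedSub ℳ U) :
    U.IsHomogeneous ℳ := by
  classical
  intro γ u hu
  rw [hU] at hu
  induction hu using Submodule.span_induction generalizing γ with
  | mem x hx =>
    obtain ⟨hxU, j, hj⟩ := hx
    by_cases h : j = γ
    · subst h; rwa [decompose_of_mem_same ℳ hj]
    · rw [decompose_of_mem_ne ℳ hj h]; exact U.zero_mem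
  | zero => simp
  | add a b _ _ iha ihb =>
    rw [decompose_add, DirectSum.add_apply, AddMemClass.coe_add]
    exact U.add_mem (iha γ) (ihb γ)
  | smul r x _ ih =>
    rw [← sum_support_decompose 𝒜 r, Finset.sum_smul, decompose_sum, DFinsupp.finsetSum_apply,
      AddSubmonoidClass.coe_finsetSum]
    refine Submodule.sum_mem U fun d _ => ?_
    rw [coe_decompose_smul_of_mem (decompose 𝒜 r d).2 x γ]
    exact U.smul_mem _ (ih _)

end Decomposition

open DirectSum in
theorem IsGrWJgrSemiprime.smul_mem_sup_Jgr {Γ R M σA σM : Type*} [DecidableEq Γ] [AddGroup Γ]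
    [CommRing R] [AddCommGroup M] [Module R M] [SetLike σA R] [AddSubmonoidClass σA R]
    {𝒜 : Γ → σA} [GradedRing 𝒜] [SetLike σM M] [AddSubmonoidClass σM M] {ℳ : Γ → σM}
    [Decomposition ℳ] [SetLike.GradedSMul 𝒜 ℳ] {U : Submodule R M}
    (hU : IsGrWJgrSemiprime 𝒜 ℳ U) {r : R} (hr : SetLike.IsHomogeneousElem 𝒜 r) {n : ℕ}
    (hn : 0 < n) {m : M} (hm : r ^ n • m ∈ U) : r • m ∈ U ⊔ Jgr ℳ := by
  classical
  obtain ⟨hUgr, -, hsp⟩ := hU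
  obtain ⟨d, hd⟩ := hr
  rw [← sum_support_decompose ℳ m, Finset.smul_sum]
  refine Submodule.sum_mem _ fun i _ => ?_
  have hmi : SetLike.IsHomogeneousElem ℳ (decompose ℳ m i : M) := ⟨i, (decompose ℳ m i).2⟩
  by_cases h0 : r ^ n • (decompose ℳ m i : M) = 0
  · exact Submodule.mem_sup_right (smul_mem_Jgr_of_pow_smul_eq_zero ⟨d, hd⟩ hmi h0)
  · refine hsp r _ n hn ⟨d, hd⟩ hmi h0 ?_
    have h := hUgr.isHomogeneous 𝒜 (n • d + i) hm
    rwa [coe_decompose_smul_of_mem (SetLike.pow_mem_graded n hd), neg_add_cancel_left] at h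

variable {Γ : Type*} [AddGroup Γ] [DecidableEq Γ]
  {R : Type*} [CommRing R] (𝒜 : Γ → AddSubgroup R) [GradedRing 𝒜]
  {M : Type*} [AddCommGroup M] [Module R M]
  (ℳ : Γ → AddSubgroup M) [SetLike.GradedSMul 𝒜 ℳ] [DirectSum.Decomposition ℳ]

theorem stmt2 (U : Submodule R M) (hU : IsGradedSub ℳ U) (hprop : U ≠ ⊤) :
    IsGrWJgrSemiprime 𝒜 ℳ U ↔
      ∀ r : R, SetLike.IsHomogeneousElem 𝒜 r → ∀ n : ℕ, 0 < n →
        (mcolon U (Ideal.span {r ^ n}) : Set M) ⊆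
          ((mcolon (⊥ : Submodule R M) (Ideal.span {r ^ n}) : Submodule R M) : Set M) ∪
            (mcolon (U ⊔ Jgr ℳ) (Ideal.span {r}) : Set M) := by
  refine ⟨fun h r hr n hn m hm => Or.inr ?_,
    fun h => ⟨hU, hprop, fun r m n hn hr _ hne hmem => ?_⟩⟩
  · exact mem_mcolon_span_singleton.mpr
      (h.smul_mem_sup_Jgr hr hn (mem_mcolon_span_singleton.mp hm))
  · rcases h r hr n hn (mem_mcolon_span_singleton.mpr hmem) with h0 | h1
    · exact absurd ((Submodule.mem_bot R).mp (mem_mcolon_span_singleton.mp h0)) hne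
    · exact mem_mcolon_span_singleton.mp h1
end

section
/- If M is a graded semisimple R-module, then every graded weakly J_gr-semiprime submodule of M is a graded weakly semiprime submodule. -/
/-!
In a graded semisimple module `M = ⨁ Sᵢ`, the sum `Bᵢ` of all summands but `Sᵢ` is a graded
complement of the graded simple submodule `Sᵢ`, hence graded maximal as soon as `Sᵢ ≠ 0`
(and equal to `M` otherwise). So `J_gr(M) ≤ ⋂ᵢ Bᵢ = 0`, and the defining implication of a
graded weakly `J_gr`-semiprime submodule, `rm ∈ U + J_gr(M)`, is already `rm ∈ U`.
-/

open Pointwise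

variable {Γ : Type*} [AddGroup Γ] [DecidableEq Γ]
  {R : Type*} [CommRing R] (𝒜 : Γ → AddSubgroup R) [GradedRing 𝒜]
  {M : Type*} [AddCommGroup M] [Module R M]
  (ℳ : Γ → AddSubgroup M) [SetLike.GradedSMul 𝒜 ℳ] [DirectSum.Decomposition ℳ]

open DirectSum

theorem iSupIndep.iInf_iSup_ne_eq_bot {A N ι : Type*} [Ring A] [AddCommGroup N] [Module A N]
    {S : ι → Submodule A N} (hind : iSupIndep S) (hsup : iSup S = ⊤) :
    ⨅ i, ⨆ (j) (_ : j ≠ i), S j = ⊥ := by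
  classical
  refine eq_bot_iff.2 fun m hm => ?_
  obtain ⟨f, hfS, rfl⟩ := (Submodule.mem_iSup_iff_exists_finsupp S m).1 (hsup ▸ trivial)
  have hf : ∀ i, f i = 0 := fun i => by
    have hrest : (f.erase i).sum (fun _ x => x) ∈ ⨆ (j) (_ : j ≠ i), S j :=
      Submodule.finsuppSum_mem A _ (f.erase i) (fun _ x => x) fun j hj => by
        have hji : j ≠ i := by rintro rfl; exact hj Finsupp.erase_same
        rw [Finsupp.erase_ne hji]
        exact Submodule.mem_iSup_of_mem j <| Submodule.mem_iSup_of_mem hji (hfS j)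
    have hsplit : f i = f.sum (fun _ x => x) - (f.erase i).sum (fun _ x => x) :=
      eq_sub_of_add_eq (Finsupp.add_sum_erase' f i (fun _ x => x) fun _ => rfl)
    have hfi : f i ∈ ⨆ (j) (_ : j ≠ i), S j :=
      hsplit ▸ Submodule.sub_mem _ (Submodule.mem_iInf _ |>.1 hm i) hrest
    exact (Submodule.disjoint_def.1 (hind i)) _ (hfS i) hfi
  simp [Finsupp.sum, hf]

include 𝒜 in
theorem Submodule.coe_decompose_smul_mem_of_mem {N : Submodule R M} (a : R) {x : M}
    (hx : SetLike.IsHomogeneousElem ℳ x) (hxN : x ∈ N) (γ : Γ) :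
    (decompose ℳ (a • x) γ : M) ∈ N := by
  classical
  obtain ⟨i, hi⟩ := hx
  rw [← sum_support_decompose 𝒜 a, Finset.sum_smul, decompose_sum, DFinsupp.finsetSum_apply,
    AddSubmonoidClass.coe_finsetSum]
  refine N.sum_mem fun k _ => ?_
  have hmem : (decompose 𝒜 a k : R) • x ∈ ℳ (k +ᵥ i) :=
    SetLike.GradedSMul.smul_mem (SetLike.coe_mem _) hi
  rcases eq_or_ne (k +ᵥ i) γ with rfl | hne
  · rw [decompose_of_mem_same ℳ hmem]
    exact N.smul_mem _ hxN
  · rw [decompose_of_mem_ne ℳ hmem hne]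
    exact N.zero_mem

include 𝒜 in
theorem isGradedSub_iff_isHomogeneous {N : Submodule R M} :
    IsGradedSub ℳ N ↔ N.IsHomogeneous ℳ := by
  classical
  refine ⟨fun hN γ m hm => ?_, fun hN => ?_⟩
  · rw [hN, Submodule.mem_span_set'] at hm
    obtain ⟨n, c, g, rfl⟩ := hm
    rw [decompose_sum, DFinsupp.finsetSum_apply, AddSubmonoidClass.coe_finsetSum]
    exact N.sum_mem fun k _ =>
      Submodule.coe_decompose_smul_mem_of_mem 𝒜 ℳ (c k) (g k).2.2 (g k).2.1 γ
  · refine le_antisymm (fun m hm => ?_) (Submodule.span_le.2 fun x hx => hx.1)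
    rw [← sum_support_decompose ℳ m]
    exact Submodule.sum_mem _ fun γ _ =>
      Submodule.subset_span ⟨hN γ hm, γ, SetLike.coe_mem _⟩

include 𝒜 in
theorem IsGradedSub.inf {N L : Submodule R M} (hN : IsGradedSub ℳ N) (hL : IsGradedSub ℳ L) :
    IsGradedSub ℳ (N ⊓ L) := by
  rw [isGradedSub_iff_isHomogeneous 𝒜] at hN hL ⊢
  exact fun γ m hm => ⟨hN γ hm.1, hL γ hm.2⟩

omit [AddGroup Γ] [DecidableEq Γ] [DirectSum.Decomposition ℳ] in
theorem isGradedSub_iSup {ι : Sort*} {T : ι → Submodule R M} (h : ∀ i, IsGradedSub ℳ (T i)) :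
    IsGradedSub ℳ (⨆ i, T i) := by
  refine le_antisymm (iSup_le fun i => ?_) (Submodule.span_le.2 fun x hx => hx.1)
  rw [h i]
  exact Submodule.span_le.2 fun x hx => Submodule.subset_span ⟨le_iSup T i hx.1, hx.2⟩

include 𝒜 in
theorem isGrMaximal_of_isCompl {B S : Submodule R M} (hB : IsGradedSub ℳ B)
    (hS : IsGradedSub ℳ S) (hS0 : S ≠ ⊥)
    (hsimple : ∀ L : Submodule R M, IsGradedSub ℳ L → L ≤ S → L = ⊥ ∨ L = S)
    (hBS : IsCompl B S) : IsGrMaximal ℳ B := by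
  refine ⟨hB, fun hBtop => hS0 ?_, fun L hL hBL => ?_⟩
  · simpa [hBtop] using hBS.disjoint
  · have hL_eq : L = B ⊔ S ⊓ L := by
      rw [← sup_inf_assoc_of_le S hBL, hBS.sup_eq_top, top_inf_eq]
    rcases hsimple (S ⊓ L) (hS.inf 𝒜 ℳ hL) inf_le_left with h0 | hSL
    · exact .inl (by rw [hL_eq, h0, sup_bot_eq])
    · exact .inr (by rw [hL_eq, hSL, hBS.sup_eq_top])

include 𝒜 in
theorem Jgr_le_of_isCompl {B S : Submodule R M} (hB : IsGradedSub ℳ B)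
    (hS : IsGradedSub ℳ S)
    (hsimple : ∀ L : Submodule R M, IsGradedSub ℳ L → L ≤ S → L = ⊥ ∨ L = S)
    (hBS : IsCompl B S) : Jgr ℳ ≤ B := by
  rcases eq_or_ne S ⊥ with rfl | hS0
  · have hBtop : B = ⊤ := by simpa using hBS.sup_eq_top
    simp [hBtop]
  · exact sInf_le (isGrMaximal_of_isCompl 𝒜 ℳ hB hS hS0 hsimple hBS)

include 𝒜 in
theorem Jgr_eq_bot_of_iSupIndep {ι : Type*} {S : ι → Submodule R M}
    (hgr : ∀ i, IsGradedSub ℳ (S i))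
    (hsimple : ∀ i, ∀ L : Submodule R M, IsGradedSub ℳ L → L ≤ S i → L = ⊥ ∨ L = S i)
    (hind : iSupIndep S) (hsup : iSup S = ⊤) : Jgr ℳ = (⊥ : Submodule R M) := by
  refine eq_bot_iff.2 <| (le_iInf fun i => ?_).trans (hind.iInf_iSup_ne_eq_bot hsup).le
  have hcompl : IsCompl (⨆ (j) (_ : j ≠ i), S j) (S i) :=
    ⟨(hind i).symm, codisjoint_iff.2 <| by rw [sup_comm, ← iSup_split_single, hsup]⟩
  exact Jgr_le_of_isCompl 𝒜 ℳ (isGradedSub_iSup ℳ fun j => isGradedSub_iSup ℳ fun _ => hgr j)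
    (hgr i) (hsimple i) hcompl

theorem stmt11 {ι : Type*} (S : ι → Submodule R M)
    (hgr : ∀ i, IsGradedSub ℳ (S i))
    (hsimple : ∀ i, ∀ L : Submodule R M, IsGradedSub ℳ L → L ≤ S i → L = ⊥ ∨ L = S i)
    (hind : iSupIndep S) (hsup : iSup S = ⊤)
    (U : Submodule R M) (h : IsGrWJgrSemiprime 𝒜 ℳ U) :
    IsGrWSemiprime 𝒜 ℳ U := by
  obtain ⟨hUgr, hUtop, hU⟩ := h
  have hJ : Jgr ℳ = (⊥ : Submodule R M) := Jgr_eq_bot_of_iSupIndep 𝒜 ℳ hgr hsimple hind hsup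
  refine ⟨hUgr, hUtop, fun r m n hn hr hm hne hmem => ?_⟩
  simpa [hJ] using hU r m n hn hr hm hne hmem
end
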